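/- A Newton polygon P of finite area is special (i.e., all elementary summands {ℓᵢ/hᵢ} in its canonical decomposition satisfy ℓᵢ ≥ hᵢ) if and only if P * {1/1} = P, where {1/1} is the elementary polygon of length 1 and height 1. -/

import Mathlib

open Pointwise MeasureTheory

/-- The positive quadrant in `ℝ²`. -/
def Q2 : Set (ℝ × ℝ) := {p | 0 ≤ p.1 ∧ 0 ≤ p.2}

/-- The elementary Newton polygon `{ℓ/h}`. -/
noncomputable def elemPoly (l h : ℝ) : Set (ℝ × ℝ) :=
  convexHull ℝ (({((0 : ℝ), h)} + Q2) ∪ ({(l, (0 : ℝ))} + Q2))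

/-- The sum (convex hull of the Minkowski sum) of the elementary polygons listed in `L`. -/
noncomputable def sumList (L : List (ℝ × ℝ)) : Set (ℝ × ℝ) :=
  convexHull ℝ (Q2 + (L.map (fun p => elemPoly p.1 p.2)).sum)

/-- The sum of two Newton polygons: convex hull of the Minkowski sum. -/
noncomputable def polySum (N₁ N₂ : Set (ℝ × ℝ)) : Set (ℝ × ℝ) :=
  convexHull ℝ (N₁ + N₂)

/-- The product of decompositions: on elementary polygons,
`{ℓ/h} * {ℓ'/h'} = {ℓℓ' / min(ℓh', ℓ'h)}`, extended bilinearly. -/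
def prodList (L₁ L₂ : List (ℝ × ℝ)) : List (ℝ × ℝ) :=
  L₁.flatMap fun p => L₂.map fun q => (p.1 * q.1, min (p.1 * q.2) (q.1 * p.2))

/-- All lengths and heights in the list are positive. -/
def PosList (L : List (ℝ × ℝ)) : Prop := ∀ p ∈ L, 0 < p.1 ∧ 0 < p.2

/-!
Multiplying by `{1/1}` replaces each summand `{ℓ/h}` by `{ℓ/min(ℓ, h)}`, so special polygons are
fixed. Conversely, the height of a Newton polygon, i.e. the lowest point of its intersection with
the vertical axis, is the sum of the heights of its summands; if some `ℓᵢ < hᵢ`, the product has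
strictly smaller height and so differs from the polygon.
-/

lemma convex_Q2 : Convex ℝ Q2 := by
  rintro x ⟨hx₁, hx₂⟩ y ⟨hy₁, hy₂⟩ a b ha hb -
  constructor <;> simp only [Prod.fst_add, Prod.snd_add, Prod.smul_fst, Prod.smul_snd,
    smul_eq_mul] <;> positivity

lemma elemPoly_subset {l h : ℝ} (hl : 0 ≤ l) (hh : 0 ≤ h) :
    elemPoly l h ⊆ {p : ℝ × ℝ | 0 ≤ p.1 ∧ l * h ≤ h * p.1 + l * p.2} := by
  apply convexHull_min
  · rintro _ (hx | hx) <;>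
    · obtain ⟨a, rfl, b, ⟨hb₁, hb₂⟩, rfl⟩ := Set.mem_add.mp hx
      constructor <;> simp only [Prod.fst_add, Prod.snd_add] <;> nlinarith
  · rintro x ⟨hx₁, hx₂⟩ y ⟨hy₁, hy₂⟩ a b ha hb hab
    simp only [Set.mem_ofPred_eq, Prod.fst_add, Prod.snd_add, Prod.smul_fst, Prod.smul_snd,
      smul_eq_mul]
    refine ⟨by positivity, ?_⟩
    have hx := mul_le_mul_of_nonneg_left hx₂ ha
    have hy := mul_le_mul_of_nonneg_left hy₂ hb
    linear_combination hx + hy - l * h * hab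

lemma convex_Q2_add_sum (L : List (ℝ × ℝ)) :
    Convex ℝ (Q2 + (L.map fun p => elemPoly p.1 p.2).sum) := by
  induction L with
  | nil => simpa using convex_Q2
  | cons p L ih =>
    rw [List.map_cons, List.sum_cons, add_left_comm]
    exact (convex_convexHull ℝ _).add ih

lemma sumList_eq_Q2_add (L : List (ℝ × ℝ)) :
    sumList L = Q2 + (L.map fun p => elemPoly p.1 p.2).sum :=
  (convex_Q2_add_sum L).convexHull_eq

lemma mk_zero_sum_snd_mem_sumList (L : List (ℝ × ℝ)) :
    ((0 : ℝ), (L.map Prod.snd).sum) ∈ sumList L := by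
  rw [sumList_eq_Q2_add]
  induction L with
  | nil => simp [Q2]
  | cons p L ih =>
    rw [List.map_cons, List.sum_cons, List.map_cons, List.sum_cons, add_left_comm,
      show ((0 : ℝ), p.2 + (L.map Prod.snd).sum) = (0, p.2) + (0, (L.map Prod.snd).sum) by simp]
    refine Set.add_mem_add (subset_convexHull ℝ _ (Or.inl ?_)) ih
    exact Set.mem_add.mpr ⟨(0, p.2), rfl, 0, ⟨le_rfl, le_rfl⟩, add_zero _⟩

lemma fst_nonneg_and_sum_snd_le_of_mem_sumList {L : List (ℝ × ℝ)} (hL : PosList L) {x : ℝ × ℝ}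
    (hx : x ∈ sumList L) : 0 ≤ x.1 ∧ (x.1 = 0 → (L.map Prod.snd).sum ≤ x.2) := by
  rw [sumList_eq_Q2_add] at hx
  induction L generalizing x with
  | nil =>
    simp only [List.map_nil, List.sum_nil, add_zero] at hx ⊢
    exact ⟨hx.1, fun _ => hx.2⟩
  | cons p L ih =>
    obtain ⟨hl, hh⟩ := hL p List.mem_cons_self
    rw [List.map_cons, List.sum_cons, add_left_comm] at hx
    obtain ⟨y, hy, z, hz, rfl⟩ := Set.mem_add.mp hx
    obtain ⟨hy₁, hy₂⟩ := elemPoly_subset hl.le hh.le hy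
    obtain ⟨hz₁, hz₂⟩ := ih (fun q hq => hL q (List.mem_cons_of_mem p hq)) hz
    refine ⟨add_nonneg hy₁ hz₁, fun h0 => ?_⟩
    have hy0 : y.1 = 0 := by simp only [Prod.fst_add] at h0; linarith
    have hz0 : z.1 = 0 := by simp only [Prod.fst_add] at h0; linarith
    have hpy : p.2 ≤ y.2 := by
      rw [hy0] at hy₂
      nlinarith
    simpa using add_le_add hpy (hz₂ hz0)

lemma sum_snd_le_of_sumList_subset {L L' : List (ℝ × ℝ)} (hL : PosList L)
    (h : sumList L' ⊆ sumList L) : (L.map Prod.snd).sum ≤ (L'.map Prod.snd).sum :=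
  (fst_nonneg_and_sum_snd_le_of_mem_sumList hL (h (mk_zero_sum_snd_mem_sumList L'))).2 rfl

lemma prodList_one (L : List (ℝ × ℝ)) :
    prodList L [((1 : ℝ), (1 : ℝ))] = L.map fun p => (p.1, min p.1 p.2) := by
  simp only [prodList, List.map_cons, List.map_nil, mul_one, one_mul]
  exact List.flatMap_pure_eq_map _ L

theorem special_iff_mul_one_general (L : List (ℝ × ℝ)) (hL : PosList L) :
    (∀ p ∈ L, p.2 ≤ p.1) ↔
      sumList (prodList L [((1 : ℝ), (1 : ℝ))]) = sumList L := by
  rw [prodList_one]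
  constructor
  · intro h
    congr 1
    conv_rhs => rw [← L.map_id]
    exact List.map_congr_left fun p hp => by simp [min_eq_right (h p hp)]
  · intro heq
    by_contra! ⟨p, hp, hlt⟩
    have hle := sum_snd_le_of_sumList_subset hL heq.subset
    have hlt' : ((L.map fun p => (p.1, min p.1 p.2)).map Prod.snd).sum < (L.map Prod.snd).sum := by
      rw [List.map_map]
      exact List.sum_lt_sum _ _ (fun q _ => min_le_right _ _)
        ⟨p, hp, (min_le_left _ _).trans_lt hlt⟩
    exact hle.not_gt hlt'

/-- A Newton polygon is special iff all elementary summands of its canonical decomposition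
satisfy `ℓᵢ ≥ hᵢ`, and this holds if and only if `P * {1/1} = P`. -/
theorem special_iff_mul_one (L : List (ℝ × ℝ)) (hL : PosList L)
    (hcanon : L.Pairwise fun p q => p.1 / p.2 ≠ q.1 / q.2) :
    (∀ p ∈ L, p.2 ≤ p.1) ↔
      sumList (prodList L [((1 : ℝ), (1 : ℝ))]) = sumList L :=
  special_iff_mul_one_general L hL
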